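/- Let ε > 0, t > 0, and M > 0. Define I₂(z) = ∫_{1/√t}^{∞} (√ε/(√(4π) s²)) e^{−z²s²/(4ε)} h(s) ds with |h(s)| ≤ M. Then, by Cauchy–Schwarz, ‖I₂‖²_{L²(0,1)} ≤ k ε √t ∫_{1/√t}^∞ s^{−2} ∫₀¹ e^{−z²s²/(2ε)} dz ds ≤ k' ε^{3/2}, so ‖I₂‖_{L²(0,1)} ≤ K ε^{3/4}. -/

import Mathlib

/-!
Write the integrand of `I₂` as `s⁻¹ · g(s)` with `|g(s)| ≤ M √ε/√(4π) · s⁻¹ e^{-z²s²/(4ε)}`.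
Cauchy–Schwarz in `s` against the weight `s⁻²`, whose integral over `[1/√t, ∞)` is `√t`, bounds
`I₂(z)²` by `k ε √t ∫ s⁻² e^{-z²s²/(2ε)} ds`; integrating in `z` and exchanging the order of
integration gives the first estimate. The inner Gaussian integral is at most `√(2πε)/(2s)`, so the
remaining `s`-integral is `O(√ε · t)`, which gives `ε^{3/2}`, and its square root `ε^{3/4}`.
-/

open Real MeasureTheory Set

theorem sq_integral_mul_le_integral_sq_mul_integral_sq {α : Type*} [MeasurableSpace α]
    {μ : Measure α} {f g : α → ℝ} (hf : MemLp f 2 μ) (hg : MemLp g 2 μ) :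
    (∫ x, f x * g x ∂μ) ^ 2 ≤ (∫ x, f x ^ 2 ∂μ) * ∫ x, g x ^ 2 ∂μ := by
  have holder := integral_mul_norm_le_Lp_mul_Lq HolderConjugate.two_two
    (by simpa using hf) (by simpa using hg)
  simp only [norm_eq_abs, rpow_two, sq_abs, ← sqrt_eq_rpow] at holder
  calc (∫ x, f x * g x ∂μ) ^ 2 = |∫ x, f x * g x ∂μ| ^ 2 := (sq_abs _).symm
    _ ≤ (√(∫ x, f x ^ 2 ∂μ) * √(∫ x, g x ^ 2 ∂μ)) ^ 2 := by
      refine pow_le_pow_left₀ (abs_nonneg _) ?_ 2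
      refine (abs_integral_le_integral_abs).trans ?_
      simpa only [abs_mul] using holder
    _ = (∫ x, f x ^ 2 ∂μ) * ∫ x, g x ^ 2 ∂μ := by
      rw [mul_pow, sq_sqrt (integral_nonneg fun _ => sq_nonneg _),
        sq_sqrt (integral_nonneg fun _ => sq_nonneg _)]

theorem intervalIntegral_exp_neg_mul_sq_le {b c : ℝ} (hb : 0 < b) (hc : 0 ≤ c) :
    ∫ z in (0 : ℝ)..c, exp (-b * z ^ 2) ≤ √(π / b) / 2 := by
  rw [intervalIntegral.integral_of_le hc, ← integral_gaussian_Ioi]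
  exact setIntegral_mono_set (integrable_exp_neg_mul_sq hb).integrableOn
    (.of_forall fun _ => (exp_pos _).le) (.of_forall Ioc_subset_Ioi_self)

theorem inv_pow_eq_rpow_neg (s : ℝ) (n : ℕ) : s⁻¹ ^ n = s ^ (-(n : ℝ)) := by
  rw [rpow_neg_natCast, zpow_neg, zpow_natCast, inv_pow]

theorem integrableOn_Ici_inv_pow {a : ℝ} (ha : 0 < a) {n : ℕ} (hn : 1 < n) :
    IntegrableOn (fun s : ℝ => s⁻¹ ^ n) (Ici a) := by
  rw [integrableOn_Ici_iff_integrableOn_Ioi]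
  have hn' : -(n : ℝ) < -1 := by linarith [show (1 : ℝ) < n by exact_mod_cast hn]
  exact (integrableOn_Ioi_rpow_of_lt hn' ha).congr_fun
    (fun s _ => (inv_pow_eq_rpow_neg s n).symm) measurableSet_Ioi

theorem integral_Ici_inv_pow {a : ℝ} (ha : 0 < a) {n : ℕ} (hn : 1 < n) :
    ∫ s in Ici a, s⁻¹ ^ n = a⁻¹ ^ (n - 1) / (n - 1 : ℝ) := by
  have hn' : (1 : ℝ) < n := by exact_mod_cast hn
  rw [integral_Ici_eq_integral_Ioi,
    setIntegral_congr_fun measurableSet_Ioi fun s _ => inv_pow_eq_rpow_neg s n,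
    integral_Ioi_rpow_of_lt (by linarith) ha, inv_pow_eq_rpow_neg a, Nat.cast_sub hn.le,
    Nat.cast_one, show -(n : ℝ) + 1 = -(n - 1) by ring, neg_div_neg_eq]

/-- `I₂ ε (1 / √t) h` is the paper's `I₂`. -/
noncomputable def I₂ (ε a : ℝ) (h : ℝ → ℝ) (z : ℝ) : ℝ :=
  ∫ s in Ici a, √ε / (√(4 * π) * s ^ 2) * exp (-(z ^ 2 * s ^ 2) / (4 * ε)) * h s

theorem exp_neg_mul_sq_div_le_one (z s : ℝ) {d : ℝ} (hd : 0 ≤ d) :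
    exp (-(z ^ 2 * s ^ 2) / d) ≤ 1 :=
  exp_le_one_iff.2 (div_nonpos_of_nonpos_of_nonneg (neg_nonpos.2 (by positivity)) hd)

theorem norm_inv_sq_mul_exp_le (z s : ℝ) {d : ℝ} (hd : 0 ≤ d) :
    ‖s⁻¹ ^ 2 * exp (-(z ^ 2 * s ^ 2) / d)‖ ≤ s⁻¹ ^ 2 := by
  rw [norm_mul, norm_of_nonneg (by positivity), norm_of_nonneg (exp_pos _).le]
  exact mul_le_of_le_one_right (by positivity) (exp_neg_mul_sq_div_le_one _ _ hd)

theorem integrableOn_Ici_inv_sq_mul_exp {a : ℝ} (ha : 0 < a) (z : ℝ) {d : ℝ} (hd : 0 ≤ d) :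
    IntegrableOn (fun s : ℝ => s⁻¹ ^ 2 * exp (-(z ^ 2 * s ^ 2) / d)) (Ici a) :=
  (integrableOn_Ici_inv_pow ha one_lt_two).mono' (by fun_prop)
    (.of_forall fun s => norm_inv_sq_mul_exp_le z s hd)

theorem integrable_inv_sq_mul_exp_prod {μ : Measure ℝ} [IsFiniteMeasure μ] {a d : ℝ}
    (ha : 0 < a) (hd : 0 ≤ d) :
    Integrable (fun p : ℝ × ℝ => p.2⁻¹ ^ 2 * exp (-(p.1 ^ 2 * p.2 ^ 2) / d))
      (μ.prod (volume.restrict (Ici a))) := by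
  refine ((integrableOn_Ici_inv_pow ha one_lt_two).comp_snd μ).mono' (by fun_prop)
    (.of_forall fun p => norm_inv_sq_mul_exp_le p.1 p.2 hd)

theorem intervalIntegral_integral_inv_sq_mul_exp_swap {a c d : ℝ} (ha : 0 < a) (hc : 0 ≤ c)
    (hd : 0 ≤ d) :
    ∫ z in (0 : ℝ)..c, ∫ s in Ici a, s⁻¹ ^ 2 * exp (-(z ^ 2 * s ^ 2) / d) =
      ∫ s in Ici a, s⁻¹ ^ 2 * ∫ z in (0 : ℝ)..c, exp (-(z ^ 2 * s ^ 2) / d) := by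
  simp only [intervalIntegral.integral_of_le hc, ← integral_const_mul]
  exact integral_integral_swap (integrable_inv_sq_mul_exp_prod ha hd)

theorem sq_I₂_le {ε a M : ℝ} (hε : 0 < ε) (ha : 0 < a) {h : ℝ → ℝ} (hh : Measurable h)
    (hM : ∀ s, |h s| ≤ M) (z : ℝ) :
    I₂ ε a h z ^ 2 ≤ M ^ 2 / (4 * π) * ε * a⁻¹ *
      ∫ s in Ici a, s⁻¹ ^ 2 * exp (-(z ^ 2 * s ^ 2) / (2 * ε)) := by
  set c := √ε / √(4 * π)
  set g : ℝ → ℝ := fun s => c * s⁻¹ * exp (-(z ^ 2 * s ^ 2) / (4 * ε)) * h s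
  have hM0 : 0 ≤ M := (abs_nonneg _).trans (hM 0)
  have hc : c ^ 2 = ε / (4 * π) := by
    rw [div_pow, sq_sqrt hε.le, sq_sqrt (by positivity)]
  have hg_sq : ∀ s, g s ^ 2 ≤ M ^ 2 * (c ^ 2 * (s⁻¹ ^ 2 * exp (-(z ^ 2 * s ^ 2) / (2 * ε)))) := by
    intro s
    have hexp : exp (-(z ^ 2 * s ^ 2) / (4 * ε)) ^ 2 = exp (-(z ^ 2 * s ^ 2) / (2 * ε)) := by
      rw [← exp_nat_mul]; congr 1; field_simp; ring
    have hh2 : h s ^ 2 ≤ M ^ 2 := sq_le_sq' (abs_le.1 (hM s)).1 (abs_le.1 (hM s)).2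
    calc g s ^ 2 = h s ^ 2 * (c ^ 2 * (s⁻¹ ^ 2 * exp (-(z ^ 2 * s ^ 2) / (2 * ε)))) := by
          simp only [g, ← hexp]; ring
      _ ≤ _ := mul_le_mul_of_nonneg_right hh2 (by positivity)
  have hw : MemLp (fun s : ℝ => s⁻¹) 2 (volume.restrict (Ici a)) :=
    (memLp_two_iff_integrable_sq (by fun_prop)).2 (integrableOn_Ici_inv_pow ha one_lt_two)
  have hg : MemLp g 2 (volume.restrict (Ici a)) := by
    refine (hw.const_mul (c * M)).of_le (by fun_prop) (.of_forall fun s => ?_)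
    simp only [g, norm_mul, norm_eq_abs, abs_of_nonneg (by positivity : 0 ≤ c),
      abs_of_nonneg (exp_pos _).le, abs_of_nonneg hM0]
    calc c * |s⁻¹| * exp (-(z ^ 2 * s ^ 2) / (4 * ε)) * |h s| ≤ c * |s⁻¹| * 1 * M := by
          gcongr
          · exact exp_neg_mul_sq_div_le_one _ _ (by positivity)
          · exact hM s
      _ = c * M * |s⁻¹| := by ring
  have hI₂ : I₂ ε a h z = ∫ s in Ici a, s⁻¹ * g s := by
    refine integral_congr_ae (.of_forall fun s => ?_)
    simp only [g, c]; ring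
  calc I₂ ε a h z ^ 2 ≤ (∫ s in Ici a, s⁻¹ ^ 2) * ∫ s in Ici a, g s ^ 2 := by
        rw [hI₂]; exact sq_integral_mul_le_integral_sq_mul_integral_sq hw hg
    _ ≤ a⁻¹ * ∫ s in Ici a, M ^ 2 * (c ^ 2 * (s⁻¹ ^ 2 * exp (-(z ^ 2 * s ^ 2) / (2 * ε)))) := by
        have hw_int : ∫ s in Ici a, s⁻¹ ^ 2 = a⁻¹ := by
          rw [integral_Ici_inv_pow ha one_lt_two]; norm_num
        rw [hw_int]
        refine mul_le_mul_of_nonneg_left (integral_mono_of_nonneg (.of_forall fun _ => sq_nonneg _)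
          ?_ (.of_forall hg_sq)) (by positivity)
        exact ((integrableOn_Ici_inv_sq_mul_exp ha z (by positivity)).const_mul _).const_mul _
    _ = _ := by
        rw [integral_const_mul, integral_const_mul, hc]; ring

theorem intervalIntegral_sq_I₂_le {ε a M : ℝ} (hε : 0 < ε) (ha : 0 < a) {h : ℝ → ℝ}
    (hh : Measurable h) (hM : ∀ s, |h s| ≤ M) :
    ∫ z in (0 : ℝ)..1, I₂ ε a h z ^ 2 ≤ M ^ 2 / (4 * π) * ε * a⁻¹ *
      ∫ s in Ici a, s⁻¹ ^ 2 * ∫ z in (0 : ℝ)..1, exp (-(z ^ 2 * s ^ 2) / (2 * ε)) := by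
  have hH : Integrable (fun z => ∫ s in Ici a, s⁻¹ ^ 2 * exp (-(z ^ 2 * s ^ 2) / (2 * ε)))
      (volume.restrict (Ioc 0 1)) :=
    (integrable_inv_sq_mul_exp_prod ha (by positivity)).integral_prod_left
  rw [← intervalIntegral_integral_inv_sq_mul_exp_swap ha zero_le_one (by positivity),
    ← intervalIntegral.integral_const_mul, intervalIntegral.integral_of_le zero_le_one,
    intervalIntegral.integral_of_le zero_le_one]
  exact integral_mono_of_nonneg (.of_forall fun _ => sq_nonneg _) (hH.const_mul _)
    (.of_forall (sq_I₂_le hε ha hh hM))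

theorem integral_inv_sq_mul_intervalIntegral_exp_le {ε a : ℝ} (hε : 0 < ε) (ha : 0 < a) :
    ∫ s in Ici a, s⁻¹ ^ 2 * ∫ z in (0 : ℝ)..1, exp (-(z ^ 2 * s ^ 2) / (2 * ε)) ≤
      √(2 * π * ε) / 4 * a⁻¹ ^ 2 := by
  have hgauss : ∀ s > 0, ∫ z in (0 : ℝ)..1, exp (-(z ^ 2 * s ^ 2) / (2 * ε)) ≤
      √(2 * π * ε) / (2 * s) := by
    intro s hs
    have hb : 0 < s ^ 2 / (2 * ε) := by positivity
    calc ∫ z in (0 : ℝ)..1, exp (-(z ^ 2 * s ^ 2) / (2 * ε))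
        = ∫ z in (0 : ℝ)..1, exp (-(s ^ 2 / (2 * ε)) * z ^ 2) := by
          congr 1; ext z; congr 1; ring
      _ ≤ √(π / (s ^ 2 / (2 * ε))) / 2 := intervalIntegral_exp_neg_mul_sq_le hb zero_le_one
      _ = √(2 * π * ε) / (2 * s) := by
          rw [show π / (s ^ 2 / (2 * ε)) = 2 * π * ε / s ^ 2 by field_simp,
            sqrt_div (by positivity), sqrt_sq hs.le]
          ring
  calc _ ≤ ∫ s in Ici a, √(2 * π * ε) / 2 * s⁻¹ ^ 3 := by
        refine integral_mono_of_nonneg ?_ ((integrableOn_Ici_inv_pow ha (by norm_num)).const_mul _)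
          ?_
        · exact .of_forall fun s => mul_nonneg (by positivity)
            (intervalIntegral.integral_nonneg zero_le_one fun _ _ => (exp_pos _).le)
        · refine (ae_restrict_iff' measurableSet_Ici).2 (.of_forall fun s hs => ?_)
          have hs0 : 0 < s := ha.trans_le hs
          calc s⁻¹ ^ 2 * ∫ z in (0 : ℝ)..1, exp (-(z ^ 2 * s ^ 2) / (2 * ε))
              ≤ s⁻¹ ^ 2 * (√(2 * π * ε) / (2 * s)) := by gcongr; exact hgauss s hs0
            _ = √(2 * π * ε) / 2 * s⁻¹ ^ 3 := by field_simp
    _ = √(2 * π * ε) / 4 * a⁻¹ ^ 2 := by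
        rw [integral_const_mul, integral_Ici_inv_pow ha (by norm_num)]; norm_num; ring

theorem I2_estimate (t M : ℝ) (ht : 0 < t) (hM : 0 < M) :
    ∃ k k' K : ℝ, 0 < k ∧ 0 < k' ∧ 0 < K ∧ ∀ ε : ℝ, 0 < ε →
      ∀ h : ℝ → ℝ, Measurable h → (∀ s, |h s| ≤ M) →
      (∫ z in (0:ℝ)..1, (∫ s in Set.Ici (1 / Real.sqrt t),
            Real.sqrt ε / (Real.sqrt (4 * π) * s ^ 2) *
              Real.exp (-(z ^ 2 * s ^ 2) / (4 * ε)) * h s) ^ 2)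
          ≤ k * ε * Real.sqrt t * ∫ s in Set.Ici (1 / Real.sqrt t),
              s⁻¹ ^ 2 * ∫ z in (0:ℝ)..1, Real.exp (-(z ^ 2 * s ^ 2) / (2 * ε)) ∧
      k * ε * Real.sqrt t * (∫ s in Set.Ici (1 / Real.sqrt t),
              s⁻¹ ^ 2 * ∫ z in (0:ℝ)..1, Real.exp (-(z ^ 2 * s ^ 2) / (2 * ε)))
          ≤ k' * ε ^ ((3:ℝ)/2) ∧
      Real.sqrt (∫ z in (0:ℝ)..1, (∫ s in Set.Ici (1 / Real.sqrt t),
            Real.sqrt ε / (Real.sqrt (4 * π) * s ^ 2) *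
              Real.exp (-(z ^ 2 * s ^ 2) / (4 * ε)) * h s) ^ 2)
          ≤ K * ε ^ ((3:ℝ)/4) := by
  have ha : 0 < 1 / √t := by positivity
  have ha_inv : (1 / √t)⁻¹ = √t := by rw [one_div, inv_inv]
  set k := M ^ 2 / (4 * π)
  set k' := k * √(2 * π) / 4 * t * √t
  have hk' : 0 < k' := by positivity
  refine ⟨k, k', √k', by positivity, hk', sqrt_pos.2 hk', fun ε hε h hh hbound => ?_⟩
  have hL2 := intervalIntegral_sq_I₂_le hε ha hh hbound
  rw [ha_inv] at hL2
  have hJ := integral_inv_sq_mul_intervalIntegral_exp_le hε ha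
  rw [ha_inv, sq_sqrt ht.le] at hJ
  have hmid : k * ε * √t * (∫ s in Ici (1 / √t), s⁻¹ ^ 2 *
      ∫ z in (0 : ℝ)..1, exp (-(z ^ 2 * s ^ 2) / (2 * ε))) ≤ k' * ε ^ ((3 : ℝ) / 2) := by
    calc _ ≤ k * ε * √t * (√(2 * π * ε) / 4 * t) := by gcongr
      _ = k' * ε ^ ((3 : ℝ) / 2) := by
        rw [sqrt_mul (by positivity), show (3 : ℝ) / 2 = 1 + 1 / 2 by norm_num, rpow_add hε,
          rpow_one, ← sqrt_eq_rpow]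
        ring
  refine ⟨hL2, hmid, ?_⟩
  calc _ ≤ √(k' * ε ^ ((3 : ℝ) / 2)) := sqrt_le_sqrt (hL2.trans hmid)
    _ = √k' * ε ^ ((3 : ℝ) / 4) := by
      rw [sqrt_mul hk'.le, sqrt_eq_rpow (ε ^ _), ← rpow_mul hε.le]; norm_num
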